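/- Let Ω ⊆ ℂⁿ be open, let φ : Ω → ℝ be a C² plurisubharmonic function, and let f ∈ C_c^∞(Ω). Then Σ_{l=1}^{2n} ∫_Ω |∂_l f|² e^{−φ} dλ ≤ Σ_{l=1}^{2n} ∫_Ω |∂_l f − (∂_l φ) f|² e^{−φ} dλ; consequently ‖f‖²_φ + Σ_{l=1}^{2n} ‖∂_l f‖²_φ ≤ ‖f‖²_φ + Σ_{l=1}^{2n} ‖∂_l f − (∂_l φ) f‖²_φ. -/

import Mathlib

open MeasureTheory Complex Metric Filter
noncomputable section

/-- `ℂⁿ` with its Euclidean inner product and norm. -/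
abbrev Cn (n : ℕ) := EuclideanSpace ℂ (Fin n)

instance {n : ℕ} : MeasurableSpace (Cn n) := MeasurableSpace.comap WithLp.ofLp MeasurableSpace.pi

/-- Lebesgue measure on `ℂⁿ ≅ ℝ^{2n}`. -/
instance {n : ℕ} : MeasureSpace (Cn n) := ⟨MeasureTheory.Measure.map (WithLp.toLp 2) (MeasureTheory.Measure.pi fun _ => volume)⟩

/-- The real coordinate direction indexed by `(j, b)`: the `x_j`-direction if `b = false`,
the `y_j`-direction if `b = true`. -/
def dir {n : ℕ} (l : Fin n × Bool) : Cn n :=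
  EuclideanSpace.single l.1 (if l.2 then Complex.I else 1)

/-- The real partial derivative `∂_l`, `l` ranging over the `2n` real coordinate
directions of `ℂⁿ`. -/
def pd {n : ℕ} {F : Type} [NormedAddCommGroup F] [NormedSpace ℝ F]
    (l : Fin n × Bool) (f : Cn n → F) (z : Cn n) : F :=
  fderiv ℝ f z (dir l)

/-- The real Laplacian `Δφ = Σ_l ∂_l ∂_l φ`. -/
def lap {n : ℕ} (φ : Cn n → ℝ) (z : Cn n) : ℝ :=
  ∑ l : Fin n × Bool, pd l (pd l φ) z

/-- `|∇φ|²`, the squared norm of the real gradient. -/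
def gradSq {n : ℕ} (φ : Cn n → ℝ) (z : Cn n) : ℝ :=
  ∑ l : Fin n × Bool, (pd l φ z)^2

/-- The Levi form `L_u(z;t) = ¼(D²u(z)(t,t) + D²u(z)(it,it))`. -/
def levi {n : ℕ} (u : Cn n → ℝ) (z t : Cn n) : ℝ :=
  (1/4) * (fderiv ℝ (fun w => fderiv ℝ u w t) z t
    + fderiv ℝ (fun w => fderiv ℝ u w (Complex.I • t)) z (Complex.I • t))

/-- The Wirtinger derivative `∂g/∂z_j = ½(∂g/∂x_j − i ∂g/∂y_j)` of a complex-valued function. -/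
def wz {n : ℕ} (j : Fin n) (g : Cn n → ℂ) (z : Cn n) : ℂ :=
  (1/2) * (pd (j, false) g z - Complex.I * pd (j, true) g z)

/-- The Wirtinger derivative `∂g/∂z̄_j = ½(∂g/∂x_j + i ∂g/∂y_j)` of a complex-valued function. -/
def wzbar {n : ℕ} (j : Fin n) (g : Cn n → ℂ) (z : Cn n) : ℂ :=
  (1/2) * (pd (j, false) g z + Complex.I * pd (j, true) g z)

/-- The Wirtinger derivative `∂φ/∂z_j` of a real-valued function. -/
def wzR {n : ℕ} (j : Fin n) (φ : Cn n → ℝ) (z : Cn n) : ℂ :=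
  (1/2) * (Complex.ofReal (pd (j, false) φ z) - Complex.I * Complex.ofReal (pd (j, true) φ z))

/-- The Wirtinger derivative `∂φ/∂z̄_j` of a real-valued function. -/
def wzbarR {n : ℕ} (j : Fin n) (φ : Cn n → ℝ) (z : Cn n) : ℂ :=
  (1/2) * (Complex.ofReal (pd (j, false) φ z) + Complex.I * Complex.ofReal (pd (j, true) φ z))

/-- The complex Hessian coefficient `∂²φ/∂z_j∂z̄_k`. -/
def hess {n : ℕ} (φ : Cn n → ℝ) (j k : Fin n) (z : Cn n) : ℂ :=
  wz j (fun w => wzbarR k φ w) z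

/-- `∂̄*_φ f = −Σ_j (∂f_j/∂z_j − (∂φ/∂z_j) f_j)` for a `(0,1)`-form `f = (f_1,…,f_n)`. -/
def dbarStar {n : ℕ} (φ : Cn n → ℝ) (f : Fin n → Cn n → ℂ) (z : Cn n) : ℂ :=
  -∑ j, (wz j (f j) z - wzR j φ z * f j z)

/-- `f ∈ C_c^∞(Ω)`: smooth, compactly supported, with support inside `Ω`. -/
def SmoothCompSupp {n : ℕ} (Ω : Set (Cn n)) (f : Cn n → ℂ) : Prop :=
  ContDiff ℝ (⊤ : ℕ∞) f ∧ HasCompactSupport f ∧ tsupport f ⊆ Ω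

/-!
Cut `φ` off to a global `C²` weight `Φ` that agrees with `φ` near `tsupport f`. Expanding the
square and recognising `∂_l |f|² · ∂_l Φ e^{-Φ}` as part of a total derivative gives, pointwise,
`|∂_l f - (∂_l Φ) f|² e^{-Φ} = |∂_l f|² e^{-Φ} + |f|² ∂_l² Φ e^{-Φ} - ∂_l (∂_l Φ e^{-Φ} |f|²)`,
and the last term integrates to zero. Summing over `l` leaves `∫ |f|² ΔΦ e^{-Φ}`, which is
nonnegative because `Δφ = 4 Σ_j L_φ(z; e_j) ≥ 0` on `Ω`.
-/

open scoped Manifold Topology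

section Cutoff

variable {E F : Type*} [NormedAddCommGroup E] [NormedSpace ℝ E] [FiniteDimensional ℝ E]
  [NormedAddCommGroup F] [NormedSpace ℝ F]

theorem ContDiffOn.exists_contDiff_eventuallyEq_nhdsSet {k : ℕ∞} {φ : E → F} {Ω K : Set E}
    (hφ : ContDiffOn ℝ k φ Ω) (hΩ : IsOpen Ω) (hK : IsCompact K) (hKΩ : K ⊆ Ω) :
    ∃ Φ : E → F, ContDiff ℝ k Φ ∧ Φ =ᶠ[𝓝ˢ K] φ := by
  obtain ⟨L, hL, hKL, hLΩ⟩ := exists_compact_between hK hΩ hKΩ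
  obtain ⟨ψ, hψK, hψL, -⟩ :=
    exists_contMDiffMap_one_nhds_of_subset_interior 𝓘(ℝ, E) (n := k) hK.isClosed hKL
  have hψ : ContDiff ℝ k ψ := contMDiff_iff_contDiff.mp ψ.contMDiff
  refine ⟨fun z => ψ z • φ z, contDiff_iff_contDiffAt.mpr fun z => ?_, ?_⟩
  · by_cases hz : z ∈ L
    · exact hψ.contDiffAt.smul (hφ.contDiffAt (hΩ.mem_nhds (hLΩ hz)))
    · refine contDiffAt_const (c := (0 : F)).congr_of_eventuallyEq ?_
      filter_upwards [hL.isClosed.isOpen_compl.mem_nhds hz] with w hw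
      simp [hψL w hw]
  · filter_upwards [hψK] with w hw
    simp [hw]

end Cutoff

instance {n : ℕ} : BorelSpace (Cn n) :=
  inferInstanceAs (BorelSpace (PiLp 2 fun _ : Fin n => ℂ))

instance {n : ℕ} : (volume : Measure (Cn n)).IsAddHaarMeasure :=
  (PiLp.continuousLinearEquiv 2 ℝ fun _ : Fin n => ℂ).symm.isAddHaarMeasure_map
    (Measure.pi fun _ => volume)

theorem integral_fderiv_apply_eq_zero {E : Type*} [NormedAddCommGroup E] [NormedSpace ℝ E]
    [FiniteDimensional ℝ E] [MeasurableSpace E] [BorelSpace E] {μ : Measure E}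
    [μ.IsAddHaarMeasure] {g : E → ℝ} (hg : ContDiff ℝ 1 g) (hcs : HasCompactSupport g) (v : E) :
    ∫ x, fderiv ℝ g x v ∂μ = 0 := by
  have h := integral_mul_fderiv_eq_neg_fderiv_mul_of_integrable (μ := μ) (f := fun _ => (1 : ℝ))
    (g := g) (v := v) (by simp) (by simpa using ((hg.continuous_fderiv one_ne_zero).clm_apply
      continuous_const).integrable_of_hasCompactSupport (hcs.fderiv_apply (𝕜 := ℝ) v))
    (by simpa using hg.continuous.integrable_of_hasCompactSupport hcs)
    (fun _ _ => differentiableAt_const _) (fun x _ => hg.differentiable one_ne_zero x)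
  simpa using h

section PartialDerivatives

variable {n : ℕ} {F : Type} [NormedAddCommGroup F] [NormedSpace ℝ F] {l : Fin n × Bool}
  {z : Cn n}

theorem pd_eq_zero_of_notMem_tsupport {f : Cn n → F} (h : z ∉ tsupport f) : pd l f z = 0 := by
  simp [pd, fderiv_of_notMem_tsupport ℝ h]

theorem Filter.EventuallyEq.pd_nhdsSet {f g : Cn n → F} {s : Set (Cn n)} (h : f =ᶠ[𝓝ˢ s] g) :
    pd l f =ᶠ[𝓝ˢ s] pd l g := by
  rw [Filter.EventuallyEq, eventually_nhdsSet_iff_forall] at h ⊢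
  intro x hx
  filter_upwards [Filter.EventuallyEq.fderiv (𝕜 := ℝ) (h x hx)] with w hw
  simp [pd, hw]

theorem ContDiff.pd {f : Cn n → F} {k m : WithTop ℕ∞} (hf : ContDiff ℝ k f) (hmk : m + 1 ≤ k) :
    ContDiff ℝ m (pd l f) :=
  (hf.fderiv_right hmk).clm_apply contDiff_const

theorem pd_mul {g h : Cn n → ℝ} (hg : DifferentiableAt ℝ g z) (hh : DifferentiableAt ℝ h z) :
    pd l (fun w => g w * h w) z = g z * pd l h z + pd l g z * h z := by
  rw [pd, fderiv_fun_mul hg hh]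
  simp [pd, mul_comm]

theorem pd_exp_neg {φ : Cn n → ℝ} (hφ : DifferentiableAt ℝ φ z) :
    pd l (fun w => Real.exp (-φ w)) z = -(Real.exp (-φ z) * pd l φ z) := by
  rw [pd, fderiv_exp hφ.fun_neg]
  simp [pd]

theorem pd_norm_sq {f : Cn n → ℂ} (hf : DifferentiableAt ℝ f z) :
    pd l (fun w => ‖f w‖ ^ 2) z = 2 * (starRingEnd ℂ (f z) * pd l f z).re := by
  simp [pd, hf.hasFDerivAt.norm_sq.fderiv]
  ring

end PartialDerivatives

section WeightedIdentity

variable {n : ℕ} {l : Fin n × Bool} {Φ : Cn n → ℝ} {f : Cn n → ℂ}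

theorem norm_pd_sub_mul_sq_mul_exp {z : Cn n} (hΦ : ContDiff ℝ 2 Φ)
    (hf : DifferentiableAt ℝ f z) :
    ‖pd l f z - Complex.ofReal (pd l Φ z) * f z‖ ^ 2 * Real.exp (-Φ z)
      = ‖pd l f z‖ ^ 2 * Real.exp (-Φ z) + ‖f z‖ ^ 2 * pd l (pd l Φ) z * Real.exp (-Φ z)
        - pd l (fun w => pd l Φ w * Real.exp (-Φ w) * ‖f w‖ ^ 2) z := by
  have hΦz : DifferentiableAt ℝ Φ z := hΦ.differentiable two_ne_zero z
  have hpdΦ : DifferentiableAt ℝ (pd l Φ) z :=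
    (hΦ.pd (m := 1) (by norm_num)).differentiable one_ne_zero z
  have hE : DifferentiableAt ℝ (fun w => Real.exp (-Φ w)) z := hΦz.fun_neg.exp
  rw [pd_mul (hpdΦ.fun_mul hE) hf.hasFDerivAt.norm_sq.differentiableAt, pd_mul hpdΦ hE,
    pd_exp_neg hΦz, pd_norm_sq hf]
  simp only [Complex.sq_norm, Complex.normSq_apply, Complex.sub_re, Complex.sub_im,
    Complex.mul_re, Complex.mul_im, Complex.conj_re, Complex.conj_im, Complex.ofReal_re,
    Complex.ofReal_im]
  ring

theorem integrable_norm_sq_mul_pd_pd_mul_exp (hΦ : ContDiff ℝ 2 Φ) (hf : Continuous f)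
    (hcs : HasCompactSupport f) :
    Integrable fun z => ‖f z‖ ^ 2 * pd l (pd l Φ) z * Real.exp (-Φ z) := by
  have hpdpdΦ : Continuous (pd l (pd l Φ)) :=
    ((hΦ.pd (m := 1) (by norm_num)).pd (m := 0) (by norm_num)).continuous
  refine (((hf.norm.pow 2).mul hpdpdΦ).mul hΦ.continuous.neg.rexp).integrable_of_hasCompactSupport
    (.intro hcs fun z hz => ?_)
  simp [image_eq_zero_of_notMem_tsupport hz]

theorem integral_norm_pd_sub_mul_sq_mul_exp (hΦ : ContDiff ℝ 2 Φ) (hf : ContDiff ℝ 1 f)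
    (hcs : HasCompactSupport f) :
    ∫ z, ‖pd l f z - Complex.ofReal (pd l Φ z) * f z‖ ^ 2 * Real.exp (-Φ z)
      = (∫ z, ‖pd l f z‖ ^ 2 * Real.exp (-Φ z))
        + ∫ z, ‖f z‖ ^ 2 * pd l (pd l Φ) z * Real.exp (-Φ z) := by
  set g := fun w => pd l Φ w * Real.exp (-Φ w) * ‖f w‖ ^ 2
  have hg : ContDiff ℝ 1 g :=
    ((hΦ.pd (by norm_num)).mul (hΦ.neg.exp.of_le (by norm_num))).mul (hf.norm_sq ℝ)
  have hgcs : HasCompactSupport g :=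
    .intro hcs fun z hz => by simp [g, image_eq_zero_of_notMem_tsupport hz]
  have hA : Integrable fun z => ‖pd l f z‖ ^ 2 * Real.exp (-Φ z) :=
    (((hf.pd (m := 0) le_rfl).continuous.norm.pow 2).mul
      hΦ.continuous.neg.rexp).integrable_of_hasCompactSupport
      (.intro hcs fun z hz => by simp [pd_eq_zero_of_notMem_tsupport hz])
  have hD : Integrable (pd l g) :=
    (hg.pd (m := 0) le_rfl).continuous.integrable_of_hasCompactSupport
      (hgcs.fderiv_apply (𝕜 := ℝ) _)
  have hdiv : ∫ z, pd l g z = 0 := integral_fderiv_apply_eq_zero hg hgcs (dir l)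
  have hH := integrable_norm_sq_mul_pd_pd_mul_exp (l := l) hΦ hf.continuous hcs
  rw [integral_congr_ae (.of_forall fun z => norm_pd_sub_mul_sq_mul_exp hΦ
    (hf.differentiable one_ne_zero z)), integral_sub (hA.fun_add hH) hD, integral_add hA hH, hdiv,
    sub_zero]

theorem sum_integral_norm_pd_sq_mul_exp_le (hΦ : ContDiff ℝ 2 Φ) (hf : ContDiff ℝ 1 f)
    (hcs : HasCompactSupport f) (hlap : ∀ z ∈ tsupport f, 0 ≤ lap Φ z) :
    ∑ l : Fin n × Bool, ∫ z, ‖pd l f z‖ ^ 2 * Real.exp (-Φ z)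
      ≤ ∑ l : Fin n × Bool,
          ∫ z, ‖pd l f z - Complex.ofReal (pd l Φ z) * f z‖ ^ 2 * Real.exp (-Φ z) := by
  simp_rw [integral_norm_pd_sub_mul_sq_mul_exp hΦ hf hcs, Finset.sum_add_distrib]
  refine le_add_of_nonneg_right ?_
  rw [← integral_finsetSum _ fun l _ => integrable_norm_sq_mul_pd_pd_mul_exp hΦ hf.continuous hcs]
  refine integral_nonneg fun z => ?_
  have hsum : ∑ l : Fin n × Bool, ‖f z‖ ^ 2 * pd l (pd l Φ) z * Real.exp (-Φ z)
      = ‖f z‖ ^ 2 * lap Φ z * Real.exp (-Φ z) := by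
    simp only [lap, Finset.mul_sum, Finset.sum_mul]
  simp only [hsum]
  by_cases hz : z ∈ tsupport f
  · exact mul_nonneg (mul_nonneg (sq_nonneg _) (hlap z hz)) (Real.exp_pos _).le
  · simp [image_eq_zero_of_notMem_tsupport hz]

end WeightedIdentity

section Weights

variable {n : ℕ}

theorem lap_nonneg_of_levi_nonneg {φ : Cn n → ℝ} {z : Cn n} (h : ∀ t, 0 ≤ levi φ z t) :
    0 ≤ lap φ z := by
  have hI (j : Fin n) : (Complex.I • dir (j, false) : Cn n) = dir (j, true) := by
    ext k; simp [dir]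
  have hpair (j : Fin n) :
      ∑ b : Bool, pd (j, b) (pd (j, b) φ) z = 4 * levi φ z (dir (j, false)) := by
    rw [Fintype.sum_bool, levi, hI]
    unfold pd
    ring
  rw [lap, Fintype.sum_prod_type, Finset.sum_congr rfl fun j _ => hpair j]
  exact Finset.sum_nonneg fun j _ => mul_nonneg (by norm_num) (h _)

theorem setIntegral_eq_integral_of_eventuallyEq_weight {Ω : Set (Cn n)} {f : Cn n → ℂ}
    {φ Φ : Cn n → ℝ} (hfΩ : tsupport f ⊆ Ω) (hφΦ : φ =ᶠ[𝓝ˢ (tsupport f)] Φ)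
    (F : ℂ → ℂ → ℝ → ℝ → ℝ) (hF : ∀ r s, F 0 0 r s = 0) (l : Fin n × Bool) :
    ∫ z in Ω, F (pd l f z) (f z) (pd l φ z) (φ z)
      = ∫ z, F (pd l f z) (f z) (pd l Φ z) (Φ z) := by
  have hoff {ψ : Cn n → ℝ} {z : Cn n} (hz : z ∉ tsupport f) :
      F (pd l f z) (f z) (pd l ψ z) (ψ z) = 0 := by
    rw [image_eq_zero_of_notMem_tsupport hz, pd_eq_zero_of_notMem_tsupport hz, hF]
  rw [setIntegral_eq_integral_of_forall_compl_eq_zero fun z hz => hoff fun h => hz (hfΩ h)]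
  refine integral_congr_ae (.of_forall fun z => ?_)
  dsimp only
  by_cases hz : z ∈ tsupport f
  · rw [hφΦ.self_of_nhdsSet hz, hφΦ.pd_nhdsSet.self_of_nhdsSet hz]
  · rw [hoff hz, hoff hz]

end Weights

/-- for a plurisubharmonic C² weight,
`Σ_l ∫ |∂_l f|² e^{−φ} ≤ Σ_l ∫ |∂_l f − (∂_l φ) f|² e^{−φ}`, and consequently the same
inequality with `‖f‖²_φ` added to both sides. -/
theorem stmt1 {n : ℕ} (Ω : Set (Cn n)) (hΩ : IsOpen Ω)
    (φ : Cn n → ℝ) (hφ : ContDiffOn ℝ 2 φ Ω)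
    (hpsh : ∀ z ∈ Ω, ∀ t : Cn n, 0 ≤ levi φ z t)
    (f : Cn n → ℂ) (hf : SmoothCompSupp Ω f) :
    (∑ l : Fin n × Bool, ∫ z in Ω, ‖pd l f z‖^2 * Real.exp (-φ z))
      ≤ (∑ l : Fin n × Bool,
          ∫ z in Ω, ‖pd l f z - Complex.ofReal (pd l φ z) * f z‖^2 * Real.exp (-φ z)) ∧
    (∫ z in Ω, ‖f z‖^2 * Real.exp (-φ z))
        + (∑ l : Fin n × Bool, ∫ z in Ω, ‖pd l f z‖^2 * Real.exp (-φ z))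
      ≤ (∫ z in Ω, ‖f z‖^2 * Real.exp (-φ z))
        + (∑ l : Fin n × Bool,
            ∫ z in Ω, ‖pd l f z - Complex.ofReal (pd l φ z) * f z‖^2 * Real.exp (-φ z)) := by
  obtain ⟨hf_smooth, hf_cs, hfΩ⟩ := hf
  obtain ⟨Φ, hΦ, hΦφ⟩ := hφ.exists_contDiff_eventuallyEq_nhdsSet (k := 2) hΩ hf_cs hfΩ
  have hlap : ∀ z ∈ tsupport f, 0 ≤ lap Φ z := fun z hz => by
    have hlap_eq : lap Φ z = lap φ z :=
      Finset.sum_congr rfl fun l _ => hΦφ.pd_nhdsSet.pd_nhdsSet.self_of_nhdsSet hz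
    exact hlap_eq ▸ lap_nonneg_of_levi_nonneg (hpsh z (hfΩ hz))
  have key := sum_integral_norm_pd_sq_mul_exp_le hΦ (hf_smooth.of_le (by norm_num)) hf_cs hlap
  have hA := setIntegral_eq_integral_of_eventuallyEq_weight hfΩ hΦφ.symm
    (fun a _ _ s => ‖a‖ ^ 2 * Real.exp (-s)) (by simp)
  have hB := setIntegral_eq_integral_of_eventuallyEq_weight hfΩ hΦφ.symm
    (fun a c r s => ‖a - Complex.ofReal r * c‖ ^ 2 * Real.exp (-s)) (by simp)
  beta_reduce at hA hB
  simp only [hA, hB]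
  exact ⟨key, add_le_add_right key _⟩
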